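/- arXiv:1901.08628 — 7 statements merged into one kernel-verified Lean document; each statement's English description precedes it below -/
import Mathlib

section
/- Let (S,d) be a finite metric space, let c_1, ..., c_k ∈ S be pairwise distinct, let C0 ⊆ S (with k ≥ 1 or C0 nonempty), and let ρ ≥ 0 be such that d(s, {c_1, ..., c_k} ∪ C0) ≤ ρ for every s ∈ S. Let a be a closest-center assignment for c_1, ..., c_k and C0, with clusters L_i = a^{-1}(c_i). For each i ∈ {1, ..., k} let y_i be any element of L_i ∪ {c_i}. Then for every s ∈ S, d(s, {y_1, ..., y_k} ∪ C0) ≤ 2ρ. (Center-swapping lemma: replacing each center by an arbitrary element of its cluster at most doubles the covering radius; used in the proofs of Theorems 1 and 2.) -/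
/-!
Every point `s` lies within `ρ` of its assigned center `a s`. If `a s ∈ C0` that center is kept.
Otherwise `a s = c i`, and the replacement `y i` lies in the cluster of `c i` (or is `c i`), so it is
itself within `ρ` of `c i`; the triangle inequality through `c i` gives `dist s (y i) ≤ 2 * ρ`.
-/

open Metric Set

section

variable {X : Type*} [PseudoMetricSpace X] {a : X → X} {ρ : ℝ}

lemma dist_le_of_mem_fiber_union_singleton (hρ : 0 ≤ ρ) (hdist : ∀ s, dist s (a s) ≤ ρ)
    {c y : X} (hy : y ∈ {s | a s = c} ∪ {c}) : dist y c ≤ ρ := by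
  rcases hy with hfiber | rfl
  · exact (show a y = c from hfiber) ▸ hdist y
  · simpa using hρ

lemma infDist_range_swap_union_le {ι : Type*} {c y : ι → X} {C0 : Set X} (hρ : 0 ≤ ρ)
    (ha : ∀ s, a s ∈ range c ∪ C0) (hdist : ∀ s, dist s (a s) ≤ ρ)
    (hy : ∀ i, y i ∈ {s | a s = c i} ∪ {c i}) (s : X) :
    infDist s (range y ∪ C0) ≤ 2 * ρ := by
  rcases ha s with ⟨i, hi⟩ | hC0
  · have hsc : dist s (c i) ≤ ρ := hi ▸ hdist s
    have hyc : dist (y i) (c i) ≤ ρ := dist_le_of_mem_fiber_union_singleton hρ hdist (hy i)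
    calc infDist s (range y ∪ C0) ≤ dist s (y i) :=
          infDist_le_dist_of_mem (mem_union_left _ (mem_range_self i))
      _ ≤ dist s (c i) + dist (y i) (c i) := dist_triangle_right _ _ _
      _ ≤ 2 * ρ := by linarith
  · calc infDist s (range y ∪ C0) ≤ dist s (a s) := infDist_le_dist_of_mem (mem_union_right _ hC0)
      _ ≤ 2 * ρ := by linarith [hdist s]

end

theorem stmt2_general {X : Type*} [MetricSpace X] {k : ℕ}
    (c : Fin k → X)
    (C0 : Set X)
    (ρ : ℝ) (hρ : 0 ≤ ρ)
    (hcov : ∀ s : X, Metric.infDist s (Set.range c ∪ C0) ≤ ρ)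
    (a : X → X)
    (ha1 : ∀ s, a s ∈ Set.range c ∪ C0)
    (ha2 : ∀ s, dist s (a s) = Metric.infDist s (Set.range c ∪ C0))
    (y : Fin k → X)
    (hy : ∀ i, y i ∈ {s | a s = c i} ∪ {c i}) :
    ∀ s : X, Metric.infDist s (Set.range y ∪ C0) ≤ 2 * ρ :=
  infDist_range_swap_union_le hρ ha1 (fun s => (ha2 s).trans_le (hcov s)) hy

/-- center-swapping lemma: if the pairwise distinct centers
`c 1, ..., c k` together with `C0` cover every point within radius `ρ`, `a` is a
closest-center assignment (so the cluster of `c i` is `{s | a s = c i}`), and each `y i`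
is an arbitrary element of its cluster `L i` (or `c i` itself), then the swapped centers
`y 1, ..., y k` together with `C0` cover every point within radius `2 * ρ`. -/
theorem stmt2 {X : Type*} [MetricSpace X] [Fintype X] [Nonempty X] {k : ℕ}
    (c : Fin k → X) (hinj : Function.Injective c)
    (C0 : Set X) (hne : 1 ≤ k ∨ C0.Nonempty)
    (ρ : ℝ) (hρ : 0 ≤ ρ)
    (hcov : ∀ s : X, Metric.infDist s (Set.range c ∪ C0) ≤ ρ)
    (a : X → X)
    (ha1 : ∀ s, a s ∈ Set.range c ∪ C0)
    (ha2 : ∀ s, dist s (a s) = Metric.infDist s (Set.range c ∪ C0))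
    (y : Fin k → X)
    (hy : ∀ i, y i ∈ {s | a s = c i} ∪ {c i}) :
    ∀ s : X, Metric.infDist s (Set.range y ∪ C0) ≤ 2 * ρ :=
  stmt2_general c C0 ρ hρ hcov a ha1 ha2 y hy
end

section
/- Let (X,d) be a finite metric space, let S' ⊆ X be nonempty, let C0' ⊆ X, let k ∈ ℕ, and let R, Δ ≥ 0. Suppose S' = A ∪ B, where every a ∈ A satisfies d(a, C0') ≤ R (in particular A = ∅ if C0' = ∅), and B ⊆ B_1 ∪ ... ∪ B_k for sets B_j ⊆ X with d(x, y) ≤ Δ for all x, y belonging to a common B_j. Let c_1, ..., c_k be a greedy sequence of length k on S' with respect to C0'. Then every s ∈ S' satisfies d(s, {c_1, ..., c_k} ∪ C0') ≤ max(R, Δ). (Greedy covering lemma: the three-case pigeonhole argument at the core of the proofs of Theorems 1 and 2.) -/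
/-!
Suppose some `s ∈ S'` were farther than `r = max R Δ` from all centers. Since the greedy choice
maximizes the distance to the centers chosen so far, every `c i` is then farther than `r` from
`C0'` and from all earlier `c j`. Points of `A` are within `R ≤ r` of `C0'`, so `s` and all `c i`
lie in `B`; these are `k + 1` points at pairwise distance `> Δ`, which cannot fit into `k` sets
of diameter `≤ Δ`.
-/

/-- `c` is a greedy (farthest-point) sequence of length `k` on `S'` with respect to the
initially given centers `C0'`. -/
def IsGreedySeq {X : Type*} [MetricSpace X] (S' C0' : Set X) {k : ℕ} (c : Fin k → X) : Prop :=
  (∀ i, c i ∈ S') ∧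
  ∀ i : Fin k, ∀ s ∈ S',
    Metric.infDist s (C0' ∪ c '' {j | j < i}) ≤ Metric.infDist (c i) (C0' ∪ c '' {j | j < i})

open Metric Set

theorem exists_ne_dist_le_of_card_lt {X ι κ : Type*} [PseudoMetricSpace X] [Fintype ι]
    [Fintype κ] (hcard : Fintype.card κ < Fintype.card ι) {Δ : ℝ} (B : κ → Set X)
    (hB : ∀ j, ∀ x ∈ B j, ∀ y ∈ B j, dist x y ≤ Δ) (p : ι → X) (hp : ∀ i, p i ∈ ⋃ j, B j) :
    ∃ a b, a ≠ b ∧ dist (p a) (p b) ≤ Δ := by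
  choose f hf using fun i => mem_iUnion.1 (hp i)
  obtain ⟨a, b, hab, hfab⟩ := Fintype.exists_ne_map_eq_of_card_lt f hcard
  exact ⟨a, b, hab, hB _ _ (hf a) _ (hfab ▸ hf b)⟩

namespace IsGreedySeq

variable {X : Type*} [MetricSpace X] {S' C0' : Set X} {k : ℕ} {c : Fin k → X} {s : X} {r : ℝ}

theorem lt_infDist_prefix (hc : IsGreedySeq S' C0' c) (hs : s ∈ S')
    (hfar : r < infDist s (range c ∪ C0')) {i : Fin k}
    (hne : (C0' ∪ c '' {j | j < i}).Nonempty) :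
    r < infDist (c i) (C0' ∪ c '' {j | j < i}) := by
  have hsub : C0' ∪ c '' {j | j < i} ⊆ range c ∪ C0' :=
    union_subset subset_union_right ((image_subset_range c _).trans subset_union_left)
  exact hfar.trans_le ((infDist_le_infDist_of_subset hsub hne).trans (hc.2 i s hs))

theorem lt_infDist_initial (hc : IsGreedySeq S' C0' c) (hs : s ∈ S')
    (hfar : r < infDist s (range c ∪ C0')) (hC0 : C0'.Nonempty) (i : Fin k) :
    r < infDist (c i) C0' :=
  (hc.lt_infDist_prefix hs hfar (hC0.mono subset_union_left)).trans_le
    (infDist_le_infDist_of_subset subset_union_left hC0)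

theorem lt_dist_of_lt (hc : IsGreedySeq S' C0' c) (hs : s ∈ S')
    (hfar : r < infDist s (range c ∪ C0')) {i j : Fin k} (hji : j < i) :
    r < dist (c i) (c j) := by
  have hmem : c j ∈ C0' ∪ c '' {j | j < i} := Or.inr ⟨j, hji, rfl⟩
  exact (hc.lt_infDist_prefix hs hfar ⟨_, hmem⟩).trans_le (infDist_le_dist_of_mem hmem)

/-- The far point `s` (index `none`) together with the centers `c i` (index `some i`). -/
theorem pairwise_lt_dist (hc : IsGreedySeq S' C0' c) (hs : s ∈ S')
    (hfar : r < infDist s (range c ∪ C0')) :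
    Pairwise fun a b : Option (Fin k) => r < dist (a.elim s c) (b.elim s c) := by
  have hs_far : ∀ i, r < dist s (c i) := fun i =>
    hfar.trans_le (infDist_le_dist_of_mem (Or.inl ⟨i, rfl⟩))
  rintro (_ | i) (_ | j) hab
  · exact absurd rfl hab
  · exact hs_far j
  · exact dist_comm s (c i) ▸ hs_far i
  · rcases lt_trichotomy i j with hij | rfl | hji
    · exact dist_comm (c j) (c i) ▸ hc.lt_dist_of_lt hs hfar hij
    · exact absurd rfl hab
    · exact hc.lt_dist_of_lt hs hfar hji

end IsGreedySeq

theorem stmt3_general {X : Type*} [MetricSpace X]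
    (S' : Set X) (C0' : Set X) (k : ℕ)
    (R Δ : ℝ)
    (A B : Set X) (hAB : S' = A ∪ B)
    (hA : ∀ a ∈ A, Metric.infDist a C0' ≤ R)
    (hA0 : C0' = ∅ → A = ∅)
    (Bsets : Fin k → Set X)
    (hBsub : B ⊆ ⋃ j, Bsets j)
    (hBdiam : ∀ j, ∀ x ∈ Bsets j, ∀ y ∈ Bsets j, dist x y ≤ Δ)
    (c : Fin k → X) (hc : IsGreedySeq S' C0' c) :
    ∀ s ∈ S', Metric.infDist s (Set.range c ∪ C0') ≤ max R Δ := by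
  intro s hs
  by_contra! hfar
  have mem_B : ∀ x ∈ S', (C0'.Nonempty → R < infDist x C0') → x ∈ B := by
    intro x hx hfarC0
    rcases hAB ▸ hx with hxA | hxB
    · have hC0 : C0'.Nonempty := nonempty_iff_ne_empty.2 fun h => by simp [hA0 h] at hxA
      exact absurd (hA x hxA) (hfarC0 hC0).not_ge
    · exact hxB
  have hsB : s ∈ B := mem_B s hs fun hC0 => (le_max_left R Δ).trans_lt
    (hfar.trans_le (infDist_le_infDist_of_subset subset_union_right hC0))
  have hcB : ∀ i, c i ∈ B := fun i => mem_B _ (hc.1 i) fun hC0 =>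
    (le_max_left R Δ).trans_lt (hc.lt_infDist_initial hs hfar hC0 i)
  obtain ⟨a, b, hab, hle⟩ := exists_ne_dist_le_of_card_lt (ι := Option (Fin k)) (by simp)
    Bsets hBdiam (fun o => o.elim s c) (by rintro (_ | i) <;> apply hBsub <;> simp [hsB, hcB])
  exact ((le_max_right R Δ).trans_lt (hc.pairwise_lt_dist hs hfar hab)).not_ge hle

/-- greedy covering lemma: if `S' = A ∪ B`, points of `A` are within
distance `R` of `C0'` (and `A = ∅` whenever `C0' = ∅`), and `B` is covered by `k` sets
`Bsets j`, each of diameter at most `Δ`, then a greedy sequence of length `k` on `S'`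
with respect to `C0'` covers every point of `S'` within radius `max R Δ`. -/
theorem stmt3 {X : Type*} [MetricSpace X] [Fintype X]
    (S' : Set X) (hS' : S'.Nonempty) (C0' : Set X) (k : ℕ)
    (R Δ : ℝ) (hR : 0 ≤ R) (hΔ : 0 ≤ Δ)
    (A B : Set X) (hAB : S' = A ∪ B)
    (hA : ∀ a ∈ A, Metric.infDist a C0' ≤ R)
    (hA0 : C0' = ∅ → A = ∅)
    (Bsets : Fin k → Set X)
    (hBsub : B ⊆ ⋃ j, Bsets j)
    (hBdiam : ∀ j, ∀ x ∈ Bsets j, ∀ y ∈ Bsets j, dist x y ≤ Δ)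
    (c : Fin k → X) (hc : IsGreedySeq S' C0' c) :
    ∀ s ∈ S', Metric.infDist s (Set.range c ∪ C0') ≤ max R Δ :=
  stmt3_general S' C0' k R Δ A B hAB hA hA0 Bsets hBsub hBdiam c hc
end

section
/- Let (S,d) be a finite metric space partitioned into two groups S_1, S_2, let k_1 ≤ |S_1| and k_2 ≤ |S_2| with k = k_1 + k_2 ≥ 1, let C0 ⊆ S, and let r*_fair be the optimal fair k-center cost. Suppose c̃_1, ..., c̃_k ∈ S are pairwise distinct and satisfy d(s, {c̃_1, ..., c̃_k} ∪ C0) ≤ 4 r*_fair for all s ∈ S. Let a be a closest-center assignment for c̃_1, ..., c̃_k and C0 with a(c̃_i) = c̃_i, and clusters L_i = a^{-1}(c̃_i). Suppose |{i : c̃_i ∈ S_1}| > k_1 and that L_i ⊆ S_1 for every i with c̃_i ∈ S_1. Let S' = ∪_{i : c̃_i ∈ S_1} L_i, let C0' = C0 ∪ {c̃_i : c̃_i ∈ S_2}, and let ĉ_1, ..., ĉ_{k_1} be a greedy sequence of length k_1 on S' with respect to C0'. Then every s ∈ S satisfies d(s, {ĉ_1, ..., ĉ_{k_1}} ∪ C0')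 ≤ 5 r*_fair. (Core of the paper's Theorem 1: the main branch of the two-group algorithm is a 5-approximation for fair k-center.) -/
open Metric Set Matrix

section

variable {X : Type*} [MetricSpace X]

theorem card_le_ncard_of_two_mul_lt_dist {ι : Type*} {p : ι → X} {D : Set X} {r : ℝ}
    (hD : D.Finite) (hsep : ∀ i j, i ≠ j → 2 * r < dist (p i) (p j))
    (hnear : ∀ i, ∃ d ∈ D, dist (p i) d ≤ r) : Nat.card ι ≤ D.ncard := by
  choose f hfD hfdist using hnear
  have hf : InjOn f univ := by
    intro i _ j _ hij
    by_contra hne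
    have hj := hfdist j
    rw [← hij] at hj
    linarith [hsep i j hne, hfdist i, dist_triangle_right (p i) (p j) (f i)]
  simpa using ncard_le_ncard_of_injOn f (fun i _ => hfD i) hf hD

theorem Set.Finite.exists_dist_le_of_infDist_le {T : Set X} (hT : T.Finite) (hne : T.Nonempty)
    {q : X} {r : ℝ} (h : infDist q T ≤ r) : ∃ c ∈ T, dist q c ≤ r := by
  obtain ⟨c, hc, hqc⟩ := hT.isCompact.exists_infDist_eq_dist hne q
  exact ⟨c, hc, hqc ▸ h⟩

namespace IsGreedySeq

variable {S' C0' : Set X} {n : ℕ} {c : Fin n → X} {s : X}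

theorem infDist_le_dist (hc : IsGreedySeq S' C0' c) (hs : s ∈ S') {i : Fin n} {t : X}
    (ht : t ∈ C0' ∪ c '' {j | j < i}) : infDist s (range c ∪ C0') ≤ dist (c i) t := by
  have hsub : C0' ∪ c '' {j | j < i} ⊆ range c ∪ C0' := by
    rintro x (hx | ⟨j, -, rfl⟩)
    exacts [Or.inr hx, Or.inl ⟨j, rfl⟩]
  calc infDist s (range c ∪ C0') ≤ infDist s (C0' ∪ c '' {j | j < i}) :=
        infDist_le_infDist_of_subset hsub ⟨t, ht⟩
    _ ≤ infDist (c i) (C0' ∪ c '' {j | j < i}) := hc.2 i s hs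
    _ ≤ dist (c i) t := infDist_le_dist_of_mem ht

theorem infDist_le_dist_of_ne (hc : IsGreedySeq S' C0' c) (hs : s ∈ S') {i j : Fin n}
    (hij : i ≠ j) : infDist s (range c ∪ C0') ≤ dist (c i) (c j) := by
  rcases hij.lt_or_gt with h | h
  · rw [dist_comm]
    exact hc.infDist_le_dist hs (Or.inr ⟨i, h, rfl⟩)
  · exact hc.infDist_le_dist hs (Or.inr ⟨j, h, rfl⟩)

theorem infDist_le_dist_vecCons_of_ne (hc : IsGreedySeq S' C0' c) (hs : s ∈ S')
    {i j : Fin (n + 1)} (hij : i ≠ j) :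
    infDist s (range c ∪ C0') ≤ dist (vecCons s c i) (vecCons s c j) := by
  have hs_c : ∀ l, infDist s (range c ∪ C0') ≤ dist s (c l) :=
    fun l => infDist_le_dist_of_mem (Or.inl ⟨l, rfl⟩)
  cases i using Fin.cases <;> cases j using Fin.cases
  · exact absurd rfl hij
  · exact hs_c _
  · rw [dist_comm]; exact hs_c _
  · exact hc.infDist_le_dist_of_ne hs fun h => hij (congrArg Fin.succ h)

theorem infDist_le_dist_vecCons_of_mem (hc : IsGreedySeq S' C0' c) (hs : s ∈ S')
    (i : Fin (n + 1)) {t : X} (ht : t ∈ C0') :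
    infDist s (range c ∪ C0') ≤ dist (vecCons s c i) t := by
  cases i using Fin.cases
  · exact infDist_le_dist_of_mem (Or.inr ht)
  · exact hc.infDist_le_dist hs (Or.inl ht)

theorem infDist_le_of_ncard_le (hc : IsGreedySeq S' C0' c) {D : Set X} (hD : D.Finite)
    (hcard : D.ncard ≤ n) {r R : ℝ} (hrR : 2 * r ≤ R)
    (hnear : ∀ q ∈ S', (∀ t ∈ C0', R < dist q t) → ∃ d ∈ D, dist q d ≤ r) (hs : s ∈ S') :
    infDist s (range c ∪ C0') ≤ R := by
  by_contra! hR
  have hmem : ∀ i, vecCons s c i ∈ S' := Fin.cases hs hc.1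
  have := card_le_ncard_of_two_mul_lt_dist hD
    (fun i j hij => hrR.trans_lt (hR.trans_le (hc.infDist_le_dist_vecCons_of_ne hs hij)))
    (fun i => hnear _ (hmem i) fun t ht => hR.trans_le (hc.infDist_le_dist_vecCons_of_mem hs i ht))
  rw [Nat.card_fin] at this
  omega

end IsGreedySeq

end

theorem stmt4_general {X : Type*} [MetricSpace X] [Fintype X]
    (G : X → Fin 2) (k1 k2 : ℕ)
    (k : ℕ)
    (C0 : Set X)
    (rfair : ℝ)
    (hr : IsLeast {r : ℝ | ∃ C : Set X, (C ∩ {x | G x = 0}).ncard = k1 ∧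
        (C ∩ {x | G x = 1}).ncard = k2 ∧
        (C ∪ C0).Nonempty ∧ r = ⨆ s : X, Metric.infDist s (C ∪ C0)} rfair)
    (ct : Fin k → X)
    (hcov : ∀ s : X, Metric.infDist s (Set.range ct ∪ C0) ≤ 4 * rfair)
    (a : X → X)
    (ha1 : ∀ s, a s ∈ Set.range ct ∪ C0)
    (ha2 : ∀ s, dist s (a s) = Metric.infDist s (Set.range ct ∪ C0))
    (hL1 : ∀ i, G (ct i) = 0 → ∀ s, a s = ct i → G s = 0)
    (S' : Set X) (hS'def : S' = {s | ∃ i, G (ct i) = 0 ∧ a s = ct i})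
    (C0' : Set X) (hC0'def : C0' = C0 ∪ (Set.range ct ∩ {x | G x = 1}))
    (chat : Fin k1 → X) (hchat : IsGreedySeq S' C0' chat) :
    ∀ s : X, Metric.infDist s (Set.range chat ∪ C0') ≤ 5 * rfair := by
  obtain ⟨⟨Cstar, hCstar, -, hCne, hcost_eq⟩, -⟩ := hr
  have hcost : ∀ q, infDist q (Cstar ∪ C0) ≤ rfair := fun q =>
    hcost_eq ▸ le_ciSup (finite_range fun s => infDist s (Cstar ∪ C0)).bddAbove q
  have hassign : ∀ q, dist q (a q) ≤ 4 * rfair := fun q => ha2 q ▸ hcov q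
  have hC0 : C0 ⊆ C0' := hC0'def ▸ subset_union_left
  have hsplit : ∀ q, q ∈ S' ∨ a q ∈ C0' := by
    intro q
    rcases ha1 q with ⟨j, hj⟩ | hq
    · by_cases h0 : G (ct j) = 0
      · exact Or.inl (hS'def ▸ ⟨j, h0, hj.symm⟩)
      · exact Or.inr (hC0'def ▸ Or.inr ⟨⟨j, hj⟩, hj ▸ Fin.eq_one_of_ne_zero _ h0⟩)
    · exact Or.inr (hC0 hq)
  intro s
  have hr0 : 0 ≤ rfair := infDist_nonneg.trans (hcost s)
  rcases hsplit s with hs | hs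
  · refine hchat.infDist_le_of_ncard_le (toFinite (Cstar ∩ {x | G x = 0})) hCstar.le
      (r := rfair) (by linarith) (fun q _ hfar => ?_) hs
    obtain ⟨c, hc | hc, hqc⟩ := (toFinite _).exists_dist_le_of_infDist_le hCne (hcost q)
    · refine ⟨c, ⟨hc, ?_⟩, hqc⟩
      rcases hsplit c with hcS' | hac
      · obtain ⟨i, hi, hci⟩ := hS'def ▸ hcS'
        exact hL1 i hi c hci
      · linarith [hfar _ hac, dist_triangle q c (a c), hassign c]
    · linarith [hfar c (hC0 hc)]
  · calc infDist s (range chat ∪ C0') ≤ dist s (a s) := infDist_le_dist_of_mem (Or.inr hs)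
      _ ≤ 4 * rfair := hassign s
      _ ≤ 5 * rfair := by linarith

/-- core of Theorem 1 of the paper: the main branch of the two-group
algorithm is a 5-approximation for fair `k`-center. The two groups are `{x | G x = 0}`
and `{x | G x = 1}`. -/
theorem stmt4 {X : Type*} [MetricSpace X] [Fintype X] [Nonempty X]
    (G : X → Fin 2) (k1 k2 : ℕ)
    (hk1 : k1 ≤ Set.ncard {x | G x = 0}) (hk2 : k2 ≤ Set.ncard {x | G x = 1})
    (k : ℕ) (hk : k = k1 + k2) (hkpos : 1 ≤ k)
    (C0 : Set X)
    (rfair : ℝ)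
    (hr : IsLeast {r : ℝ | ∃ C : Set X, (C ∩ {x | G x = 0}).ncard = k1 ∧
        (C ∩ {x | G x = 1}).ncard = k2 ∧
        (C ∪ C0).Nonempty ∧ r = ⨆ s : X, Metric.infDist s (C ∪ C0)} rfair)
    (ct : Fin k → X) (hinj : Function.Injective ct)
    (hcov : ∀ s : X, Metric.infDist s (Set.range ct ∪ C0) ≤ 4 * rfair)
    (a : X → X)
    (ha1 : ∀ s, a s ∈ Set.range ct ∪ C0)
    (ha2 : ∀ s, dist s (a s) = Metric.infDist s (Set.range ct ∪ C0))
    (hafix : ∀ i, a (ct i) = ct i)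
    (hcount : k1 < (Finset.univ.filter (fun i : Fin k => G (ct i) = 0)).card)
    (hL1 : ∀ i, G (ct i) = 0 → ∀ s, a s = ct i → G s = 0)
    (S' : Set X) (hS'def : S' = {s | ∃ i, G (ct i) = 0 ∧ a s = ct i})
    (C0' : Set X) (hC0'def : C0' = C0 ∪ (Set.range ct ∩ {x | G x = 1}))
    (chat : Fin k1 → X) (hchat : IsGreedySeq S' C0' chat) :
    ∀ s : X, Metric.infDist s (Set.range chat ∪ C0') ≤ 5 * rfair :=
  stmt4_general G k1 k2 k C0 rfair hr ct hcov a ha1 ha2 hL1 S' hS'def C0' hC0'def chat hchat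
end

section
/- For every ε > 0 there exist a finite metric space (S,d) partitioned into two groups S_1, S_2, integers k_1 ≤ |S_1| and k_2 ≤ |S_2| with k = k_1 + k_2, the set C0 = ∅, pairwise distinct points c̃_1, ..., c̃_k ∈ S with d(s, {c̃_1, ..., c̃_k}) ≤ 4 r*_fair for all s ∈ S, a closest-center assignment a for c̃_1, ..., c̃_k with a(c̃_i) = c̃_i and clusters L_i = a^{-1}(c̃_i) satisfying |{i : c̃_i ∈ S_1}| > k_1 and L_i ⊆ S_1 for every i with c̃_i ∈ S_1, and a greedy sequence ĉ_1, ..., ĉ_{k_1} of length k_1 on S' = ∪_{i : c̃_i ∈ S_1} L_i with respect to C0' = {c̃_i : c̃_i ∈ S_2}, such that r*_fair > 0 and some s ∈ S satisfies d(s, {ĉ_1, ..., ĉ_{k_1}} ∪ C0') ≥ (5 − ε) · r*_fair. (Lower-bound part of the paper's Theorem 1: the approximation factor 5 of the two-group algorithm cannot be improved to 5 − ε.) -/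
namespace Metric

variable {α : Type*} [PseudoMetricSpace α] {s : Set α} {x y z : α} {r : ℝ}

theorem infDist_le_of_exists (h : ∃ z ∈ s, dist x z ≤ r) : infDist x s ≤ r :=
  let ⟨_, hz, hle⟩ := h
  (infDist_le_dist_of_mem hz).trans hle

theorem infDist_le_infDist_of_exists (h : ∃ z ∈ s, ∀ w ∈ s, dist x z ≤ dist y w) :
    infDist x s ≤ infDist y s :=
  let ⟨_, hz, hle⟩ := h
  (infDist_le_dist_of_mem hz).trans ((le_infDist ⟨_, hz⟩).2 hle)

theorem infDist_eq_dist_of_forall_dist_le (hz : z ∈ s) (h : ∀ w ∈ s, dist x z ≤ dist x w) :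
    infDist x s = dist x z :=
  le_antisymm (infDist_le_dist_of_mem hz) ((le_infDist ⟨z, hz⟩).2 h)

theorem le_infDist_of_notMem (hs : s.Nonempty) (hx : x ∉ s)
    (h : Pairwise fun a b : α => r ≤ dist a b) : r ≤ infDist x s :=
  (le_infDist hs).2 fun _ hy => h fun hxy => hx (hxy ▸ hy)

end Metric

abbrev MetricSpace.ofNatDist {α : Type*} (D : α → α → ℕ) (dist_self : ∀ x, D x x = 0)
    (dist_comm : ∀ x y, D x y = D y x) (dist_triangle : ∀ x y z, D x z ≤ D x y + D y z)
    (eq_of_dist_eq_zero : ∀ x y, D x y = 0 → x = y) : MetricSpace α where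
  dist x y := D x y
  dist_self x := by simp [dist_self x]
  dist_comm x y := by simp [dist_comm x y]
  dist_triangle x y z := by exact_mod_cast dist_triangle x y z
  eq_of_dist_eq_zero {x y} h := eq_of_dist_eq_zero x y (by exact_mod_cast h)

namespace FairCenterLowerBound

open Metric

-- A type synonym, so that the metric of `Fin 6` as a subspace of `ℝ` is not picked up.
def Pt : Type := Fin 6

instance : Fintype Pt := inferInstanceAs (Fintype (Fin 6))
instance : DecidableEq Pt := inferInstanceAs (DecidableEq (Fin 6))
instance : Nonempty Pt := inferInstanceAs (Nonempty (Fin 6))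
instance (n : ℕ) : OfNat Pt n := inferInstanceAs (OfNat (Fin 6) n)

def D : Pt → Pt → ℕ := (
  ![![0, 20, 20, 20, 20, 20],
    ![20, 0, 1, 4, 4, 5],
    ![20, 1, 0, 5, 5, 6],
    ![20, 4, 5, 0, 5, 1],
    ![20, 4, 5, 5, 0, 4],
    ![20, 5, 6, 1, 4, 0]] : Fin 6 → Fin 6 → ℕ)

instance : MetricSpace Pt :=
  .ofNatDist D (by decide) (by decide) (by decide) (by decide)

theorem dist_eq (x y : Pt) : dist x y = D x y := rfl

theorem one_le_dist : Pairwise fun x y : Pt => 1 ≤ dist x y := by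
  intro x y hxy
  rw [dist_eq, Nat.one_le_cast]
  revert x y; decide

def group : Pt → Fin 2 := ![0, 0, 0, 0, 1, 1]

def centers : Fin 4 → Pt := ![0, 1, 2, 4]

def assign : Pt → Pt := ![0, 1, 2, 1, 4, 4]

def greedy : Fin 2 → Pt := ![0, 2]

def optimal : Fin 4 → Pt := ![0, 2, 4, 5]

theorem ncard_group_zero : {x | group x = 0}.ncard = 4 := by
  rw [Set.ncard_eq_toFinset_card']; decide

theorem ncard_group_one : {x | group x = 1}.ncard = 2 := by
  rw [Set.ncard_eq_toFinset_card']; decide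

theorem iSup_infDist_optimal : ⨆ q, infDist q (Set.range optimal) = 1 := by
  refine le_antisymm (ciSup_le fun q => ?_) (le_ciSup_of_le (Finite.bddAbove_range _) 1 ?_)
  · apply infDist_le_of_exists
    simp only [dist_eq, Nat.cast_le_one]
    revert q; decide
  · exact le_infDist_of_notMem (Set.range_nonempty _) (by simp only [Set.mem_range]; decide)
      one_le_dist

theorem one_le_iSup_infDist {C : Set Pt} (hC : (C ∩ {x | group x = 0}).ncard = 2)
    (hne : C.Nonempty) : 1 ≤ ⨆ q, infDist q C := by
  obtain ⟨q, hq⟩ : ∃ q, q ∉ C := by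
    by_contra! h
    rw [Set.eq_univ_of_forall h, Set.univ_inter, ncard_group_zero] at hC
    exact absurd hC (by decide)
  exact le_ciSup_of_le (Finite.bddAbove_range _) q (le_infDist_of_notMem hne hq one_le_dist)

theorem isLeast_fairCost :
    IsLeast {r : ℝ | ∃ C : Set Pt, (C ∩ {x | group x = 0}).ncard = 2 ∧
      (C ∩ {x | group x = 1}).ncard = 2 ∧ C.Nonempty ∧ r = ⨆ s, infDist s C} 1 := by
  refine ⟨⟨Set.range optimal, ?_, ?_, Set.range_nonempty _, iSup_infDist_optimal.symm⟩, ?_⟩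
  · rw [Set.ncard_eq_toFinset_card']; decide +kernel
  · rw [Set.ncard_eq_toFinset_card']; decide +kernel
  · rintro r ⟨C, hC, -, hne, rfl⟩
    exact one_le_iSup_infDist hC hne

theorem infDist_centers_le (q : Pt) : infDist q (Set.range centers) ≤ 4 := by
  apply infDist_le_of_exists
  simp only [dist_eq, Nat.cast_le_ofNat]
  revert q; decide

theorem dist_assign (q : Pt) : dist q (assign q) = infDist q (Set.range centers) := by
  refine (infDist_eq_dist_of_forall_dist_le ?_ ?_).symm
  · revert q; decide
  · simp only [dist_eq, Nat.cast_le]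
    revert q; decide

theorem isGreedySeq_greedy :
    IsGreedySeq {s | ∃ i, group (centers i) = 0 ∧ assign s = centers i}
      (Set.range centers ∩ {x | group x = 1}) greedy := by
  refine ⟨by decide, fun i q hq => infDist_le_infDist_of_exists ?_⟩
  simp only [dist_eq, Nat.cast_le, Set.mem_union, Set.mem_image]
  revert i q; decide

theorem five_le_infDist_greedy :
    5 ≤ infDist 3 (Set.range greedy ∪ (Set.range centers ∩ {x | group x = 1})) := by
  refine (le_infDist ((Set.range_nonempty _).mono Set.subset_union_left)).2 ?_
  simp only [dist_eq, Nat.ofNat_le_cast]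
  decide

end FairCenterLowerBound

/-- lower-bound part of Theorem 1 of the paper: the approximation factor
5 of the two-group algorithm cannot be improved to `5 - ε`. Here `C0 = ∅`, the two groups
are `{x | G x = 0}` and `{x | G x = 1}`, `S' = ⋃_{i : ct i ∈ S₁} L i` and
`C0' = {ct i | ct i ∈ S₂}`. -/
theorem stmt5 (ε : ℝ) (hε : 0 < ε) :
    ∃ (X : Type) (_ : MetricSpace X) (_ : Fintype X) (_ : Nonempty X)
      (G : X → Fin 2) (k1 k2 k : ℕ) (rfair : ℝ) (ct : Fin k → X)
      (a : X → X) (chat : Fin k1 → X),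
      k1 ≤ Set.ncard {x | G x = 0} ∧ k2 ≤ Set.ncard {x | G x = 1} ∧ k = k1 + k2 ∧
      IsLeast {r : ℝ | ∃ C : Set X, (C ∩ {x | G x = 0}).ncard = k1 ∧
          (C ∩ {x | G x = 1}).ncard = k2 ∧
          C.Nonempty ∧ r = ⨆ s : X, Metric.infDist s C} rfair ∧
      Function.Injective ct ∧
      (∀ s : X, Metric.infDist s (Set.range ct) ≤ 4 * rfair) ∧
      (∀ s, a s ∈ Set.range ct) ∧
      (∀ s, dist s (a s) = Metric.infDist s (Set.range ct)) ∧
      (∀ i, a (ct i) = ct i) ∧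
      k1 < (Finset.univ.filter (fun i : Fin k => G (ct i) = 0)).card ∧
      (∀ i, G (ct i) = 0 → ∀ s, a s = ct i → G s = 0) ∧
      IsGreedySeq {s | ∃ i, G (ct i) = 0 ∧ a s = ct i} (Set.range ct ∩ {x | G x = 1}) chat ∧
      0 < rfair ∧
      ∃ s : X, (5 - ε) * rfair ≤
        Metric.infDist s (Set.range chat ∪ (Set.range ct ∩ {x | G x = 1})) := by
  open FairCenterLowerBound in
  refine ⟨Pt, inferInstance, inferInstance, inferInstance, group, 2, 2, 4, 1, centers, assign,
    greedy, by rw [ncard_group_zero]; decide, ncard_group_one.ge, rfl, isLeast_fairCost,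
    by decide, fun q => by simpa using infDist_centers_le q, by decide, dist_assign, by decide,
    by decide, by decide, isGreedySeq_greedy, one_pos, 3, ?_⟩
  linarith [five_le_infDist_greedy]
end

section
/- Let S be a finite set partitioned into groups S_1, ..., S_m and also partitioned into clusters L_1, ..., L_k with designated centers c_t ∈ L_t for t ∈ {1, ..., k}. Define a directed graph G on vertex set {1, ..., m} with an edge i → j if and only if there exists t with c_t ∈ S_i and L_t ∩ S_j ≠ ∅. Let k_1, ..., k_m ∈ ℕ with k_1 + ... + k_m = k, and set k̃_j = |{t : c_t ∈ S_j}| for each j. Assume k̃_j ≠ k_j for some j, and assume there is no directed path in G from any index r with k̃_r > k_r to any index s with k̃_s < k_s. Let 𝒢' = {j : k̃_j > k_j} and let 𝒢 = 𝒢' ∪ {j : some i ∈ 𝒢' has a directed path to j in G}. Then: (i) 𝒢 is a strict subset of {1, ..., m}; (ii) for every t such that c_t belongs to a group S_f with f ∈ 𝒢, one has L_t ⊆ ∪_{j ∈ 𝒢} S_j; and (iii) k̃_j ≤ k_j for every j ∉ 𝒢. (The correctness claim of the paper's Lemma 2 for the center-exchange routine, Algorithm 3.) -/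
/-! Both `kt` and `kf` sum to `k` and differ somewhere, so some index has a deficit; no surplus
index reaches it, so it lies outside `𝒢`. The set `𝒢` is closed under edges by construction and
contains every surplus index, which gives the other two claims. -/

open Finset

theorem Finset.exists_lt_of_sum_eq_of_ne {ι M : Type*} [AddCommMonoid M] [LinearOrder M]
    [IsOrderedCancelAddMonoid M] {s : Finset ι} {f g : ι → M}
    (hsum : ∑ i ∈ s, f i = ∑ i ∈ s, g i) (hne : ∃ i ∈ s, f i ≠ g i) : ∃ i ∈ s, f i < g i := by
  by_contra! hge
  obtain ⟨i, hi, hfg⟩ := hne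
  exact hfg ((sum_eq_sum_iff_of_le hge).1 hsum.symm i hi).symm

theorem stmt6_general {X : Type*} {m k : ℕ}
    (Gr : X → Fin m) (cl : X → Fin k) (c : Fin k → X)
    (kf : Fin m → ℕ) (hsum : ∑ j, kf j = k)
    (kt : Fin m → ℕ)
    (hkt : ∀ j, kt j = (Finset.univ.filter (fun t : Fin k => Gr (c t) = j)).card)
    (edge : Fin m → Fin m → Prop)
    (hedge : ∀ i j, edge i j ↔ ∃ t, Gr (c t) = i ∧ ∃ x, cl x = t ∧ Gr x = j)
    (hne : ∃ j, kt j ≠ kf j)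
    (hnopath : ∀ r s, kf r < kt r → kt s < kf s → ¬ Relation.ReflTransGen edge r s)
    (𝒢 : Set (Fin m))
    (h𝒢 : 𝒢 = {j | ∃ i, kf i < kt i ∧ Relation.ReflTransGen edge i j}) :
    𝒢 ≠ Set.univ ∧
    (∀ t, Gr (c t) ∈ 𝒢 → ∀ x, cl x = t → Gr x ∈ 𝒢) ∧
    (∀ j ∉ 𝒢, kt j ≤ kf j) := by
  subst h𝒢
  have hsum_kt : ∑ j, kt j = k := by
    simp only [hkt, ← card_eq_sum_card_fiberwise fun t _ => mem_coe.2 (mem_univ (Gr (c t))),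
      card_univ, Fintype.card_fin]
  obtain ⟨s, -, hdeficit⟩ := exists_lt_of_sum_eq_of_ne (s := univ) (f := kt) (g := kf)
    (hsum_kt.trans hsum.symm) (by simpa using hne)
  refine ⟨?_, ?_, ?_⟩
  · exact (Set.ne_univ_iff_exists_notMem _).2 ⟨s, fun ⟨r, hsurplus, hpath⟩ =>
      hnopath r s hsurplus hdeficit hpath⟩
  · rintro t ⟨i, hsurplus, hpath⟩ x rfl
    exact ⟨i, hsurplus, hpath.tail ((hedge _ _).2 ⟨cl x, rfl, x, rfl, rfl⟩)⟩
  · exact fun j hj => not_lt.1 fun hsurplus => hj ⟨j, hsurplus, .refl⟩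

/-- correctness claim of Lemma 2 of the paper for the center-exchange
routine. `S` is the finite type `X`, partitioned into groups `{x | Gr x = j}`, `j : Fin m`,
and into clusters `{x | cl x = t}`, `t : Fin k`, with designated centers `c t` (so
`cl (c t) = t`). The directed graph on group indices has an edge `i → j` iff some cluster
whose center is in group `i` contains an element of group `j`; directed paths (of length
zero allowed) are modeled by `Relation.ReflTransGen`. `kt j` is the number of cluster
centers in group `j`. If `kt ≠ kf` somewhere and no directed path leads from an index with
surplus (`kf r < kt r`) to an index with deficit (`kt s < kf s`), then the set `𝒢` of
indices reachable from a surplus index is a strict subset of the group indices, every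
cluster whose center belongs to a group in `𝒢` is contained in the union of the groups in
`𝒢`, and every group not in `𝒢` has at most its requested number of centers. -/
theorem stmt6 {X : Type*} [Fintype X] {m k : ℕ}
    (Gr : X → Fin m) (cl : X → Fin k) (c : Fin k → X)
    (hcenter : ∀ t, cl (c t) = t)
    (kf : Fin m → ℕ) (hsum : ∑ j, kf j = k)
    (kt : Fin m → ℕ)
    (hkt : ∀ j, kt j = (Finset.univ.filter (fun t : Fin k => Gr (c t) = j)).card)
    (edge : Fin m → Fin m → Prop)
    (hedge : ∀ i j, edge i j ↔ ∃ t, Gr (c t) = i ∧ ∃ x, cl x = t ∧ Gr x = j)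
    (hne : ∃ j, kt j ≠ kf j)
    (hnopath : ∀ r s, kf r < kt r → kt s < kf s → ¬ Relation.ReflTransGen edge r s)
    (𝒢 : Set (Fin m))
    (h𝒢 : 𝒢 = {j | ∃ i, kf i < kt i ∧ Relation.ReflTransGen edge i j}) :
    𝒢 ≠ Set.univ ∧
    (∀ t, Gr (c t) ∈ 𝒢 → ∀ x, cl x = t → Gr x ∈ 𝒢) ∧
    (∀ j ∉ 𝒢, kt j ≤ kf j) :=
  stmt6_general Gr cl c kf hsum kt hkt edge hedge hne hnopath 𝒢 h𝒢
end

section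
/- Let S be a finite set partitioned into groups S_1, ..., S_m and also partitioned into clusters L_1, ..., L_k with designated centers c_t ∈ L_t. Let w ≥ 1, let v_0, v_1, ..., v_w ∈ {1, ..., m} be pairwise distinct group indices, and for each l ∈ {0, ..., w−1} let t_l ∈ {1, ..., k} and y_l ∈ S be such that c_{t_l} ∈ S_{v_l} and y_l ∈ L_{t_l} ∩ S_{v_{l+1}} (note the t_l are then pairwise distinct, since each cluster's center lies in exactly one group). Define new centers by c'_t = y_l if t = t_l for some l, and c'_t = c_t otherwise, and set k̃_j = |{t : c_t ∈ S_j}| and k̃'_j = |{t : c'_t ∈ S_j}|. Then k̃'_{v_0} = k̃_{v_0} − 1, k̃'_{v_w} = k̃_{v_w} + 1, and k̃'_j = k̃_j for every j ∉ {v_0, v_w}. (The effect on group counts of performing the chain of center swaps along a shortest path, as in the while-loop of the paper's Algorithm 3.) -/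
/-!
Only the clusters `t l` change their center, and the `l`-th swap moves one center from group
`v l` to group `v (l + 1)`. Counting in `ℤ`, these changes telescope along the path, so the
count of group `j` changes by `[v w = j] - [v 0 = j]`.
-/

open Finset

theorem Fin.sum_univ_succ_sub_castSucc {G : Type*} [AddCommGroup G] :
    ∀ {n : ℕ} (g : Fin (n + 1) → G),
      ∑ i : Fin n, (g i.succ - g i.castSucc) = g (Fin.last n) - g 0
  | 0, g => by simp
  | n + 1, g => by
    rw [Fin.sum_univ_castSucc]
    simp only [Fin.succ_castSucc]
    rw [Fin.sum_univ_succ_sub_castSucc (fun i => g i.castSucc), Fin.succ_last, Fin.castSucc_zero]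
    abel

theorem Finset.natCast_card_filter_sub_card_filter {ι R : Type*} [Fintype ι]
    [AddCommGroupWithOne R] (p q : ι → Prop) [DecidablePred p] [DecidablePred q]
    (s : Finset ι) (h : ∀ i ∉ s, p i ↔ q i) :
    (#{i | p i} : R) - #{i | q i} =
      ∑ i ∈ s, ((if p i then 1 else 0) - if q i then 1 else 0) := by
  rw [natCast_card_filter, natCast_card_filter, ← sum_sub_distrib]
  refine (sum_subset (subset_univ s) fun i _ hi => ?_).symm
  simp [h i hi]

theorem natCast_card_fiber_sub_of_chain {κ β : Type*} [Fintype κ] [DecidableEq β] {w : ℕ}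
    (f f' : κ → β) (v : Fin (w + 1) → β) (t : Fin w → κ) (ht : Function.Injective t)
    (hf : ∀ l, f (t l) = v l.castSucc) (hf' : ∀ l, f' (t l) = v l.succ)
    (hff' : ∀ u, (∀ l, t l ≠ u) → f' u = f u) (j : β) :
    (#{u | f' u = j} : ℤ) - #{u | f u = j} =
      (if v (Fin.last w) = j then 1 else 0) - if v 0 = j then 1 else 0 := by
  classical
  rw [natCast_card_filter_sub_card_filter _ _ (univ.image t) fun u hu => ?_,
    sum_image fun a _ b _ hab => ht hab]
  · simp only [hf, hf']
    exact Fin.sum_univ_succ_sub_castSucc fun i => if v i = j then (1 : ℤ) else 0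
  · rw [hff' u fun l hl => hu (hl ▸ mem_image_of_mem t (mem_univ l))]

theorem stmt7_general {X : Type*} [Fintype X] {m k : ℕ}
    (Gr : X → Fin m) (c : Fin k → X)
    (w : ℕ) (hw : 1 ≤ w)
    (v : Fin (w + 1) → Fin m) (hv : Function.Injective v)
    (t : Fin w → Fin k) (y : Fin w → X)
    (hct : ∀ l, Gr (c (t l)) = v l.castSucc)
    (hy2 : ∀ l, Gr (y l) = v l.succ)
    (c' : Fin k → X)
    (hc'1 : ∀ l, c' (t l) = y l)
    (hc'2 : ∀ u : Fin k, (∀ l, t l ≠ u) → c' u = c u)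
    (kt kt' : Fin m → ℕ)
    (hkt : ∀ j, kt j = (Finset.univ.filter (fun u : Fin k => Gr (c u) = j)).card)
    (hkt' : ∀ j, kt' j = (Finset.univ.filter (fun u : Fin k => Gr (c' u) = j)).card) :
    kt' (v 0) + 1 = kt (v 0) ∧
    kt' (v (Fin.last w)) = kt (v (Fin.last w)) + 1 ∧
    ∀ j, j ≠ v 0 → j ≠ v (Fin.last w) → kt' j = kt j := by
  have ht : Function.Injective t := fun a b hab =>
    Fin.castSucc_injective _ <| hv <| by rw [← hct, ← hct, hab]
  have hcount (j : Fin m) : (kt' j : ℤ) - kt j =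
      (if v (Fin.last w) = j then 1 else 0) - if v 0 = j then 1 else 0 := by
    rw [hkt, hkt']
    exact natCast_card_fiber_sub_of_chain (Gr ∘ c) (Gr ∘ c') v t ht hct
      (fun l => (congrArg Gr (hc'1 l)).trans (hy2 l)) (fun u hu => congrArg Gr (hc'2 u hu)) j
  have hends : v 0 ≠ v (Fin.last w) :=
    hv.ne (by rw [Ne, Fin.ext_iff, Fin.val_zero, Fin.val_last]; omega)
  refine ⟨?_, ?_, fun j h0 hlast => ?_⟩
  · have := hcount (v 0)
    rw [if_neg hends.symm, if_pos rfl] at this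
    omega
  · have := hcount (v (Fin.last w))
    rw [if_pos rfl, if_neg hends] at this
    omega
  · have := hcount j
    rw [if_neg (Ne.symm hlast), if_neg (Ne.symm h0)] at this
    omega

/-- effect on group counts of the chain of center swaps along a shortest
path, as in the while-loop of Algorithm 3 of the paper. `S` is the finite type `X`,
partitioned into groups `{x | Gr x = j}`, `j : Fin m`, and into clusters `{x | cl x = t}`,
`t : Fin k`, with designated centers `c t` (so `cl (c t) = t`). Along pairwise distinct
group indices `v 0, ..., v w`, the center `c (t l)` of cluster `t l` lies in group
`v l` and is swapped for the element `y l` of its cluster lying in group `v (l+1)`.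
Then group `v 0` loses one center, group `v w` gains one, and all other counts are
unchanged. -/
theorem stmt7 {X : Type*} [Fintype X] {m k : ℕ}
    (Gr : X → Fin m) (cl : X → Fin k) (c : Fin k → X)
    (hcenter : ∀ t, cl (c t) = t)
    (w : ℕ) (hw : 1 ≤ w)
    (v : Fin (w + 1) → Fin m) (hv : Function.Injective v)
    (t : Fin w → Fin k) (y : Fin w → X)
    (hct : ∀ l, Gr (c (t l)) = v l.castSucc)
    (hy1 : ∀ l, cl (y l) = t l)
    (hy2 : ∀ l, Gr (y l) = v l.succ)
    (c' : Fin k → X)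
    (hc'1 : ∀ l, c' (t l) = y l)
    (hc'2 : ∀ u : Fin k, (∀ l, t l ≠ u) → c' u = c u)
    (kt kt' : Fin m → ℕ)
    (hkt : ∀ j, kt j = (Finset.univ.filter (fun u : Fin k => Gr (c u) = j)).card)
    (hkt' : ∀ j, kt' j = (Finset.univ.filter (fun u : Fin k => Gr (c' u) = j)).card) :
    kt' (v 0) + 1 = kt (v 0) ∧
    kt' (v (Fin.last w)) = kt (v (Fin.last w)) + 1 ∧
    ∀ j, j ≠ v 0 → j ≠ v (Fin.last w) → kt' j = kt j :=
  stmt7_general Gr c w hw v hv t y hct hy2 c' hc'1 hc'2 kt kt' hkt hkt'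
end

section
/- Let (S,d) be a finite metric space partitioned into groups S_1, ..., S_m, let k_1, ..., k_m ∈ ℕ with k_i ≤ |S_i|, let C0 ⊆ S, let r*_fair be the optimal fair k-center cost, and let C* be an optimal fair solution (|C* ∩ S_i| = k_i for all i and max_{s∈S} d(s, C* ∪ C0) ≤ r*_fair). Let 𝒢 ⊆ {1, ..., m}, let D ⊆ S with C0 ⊆ D, let ρ ≥ 0, and let T ⊆ S be nonempty such that: (a) T ⊆ (∪_{i ∈ 𝒢} S_i) ∪ D; and (b) every s ∈ (S \ T) ∪ D satisfies d(s, D) ≤ ρ. Let k̃ = Σ_{i ∈ 𝒢} k_i and let f_1, ..., f_{k̃} be a greedy sequence of length k̃ on T with respect to D. Then every s ∈ T satisfies d(s, D ∪ {f_1, ..., f_{k̃}}) ≤ max(ρ + r*_fair, 2 r*_fair). (The inductive-step inequality in the proof of the paper's Theorem 2 for the multi-group algorithm.) -/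
/-!
If some `s ∈ T` were farther than `R = max (ρ + r*) (2 r*)` from `D ∪ {f₁, …, f_k̃}`, then by
greediness `f₁, …, f_k̃, s` would be `k̃ + 1` points, pairwise more than `2 r*` apart and more than
`ρ + r*` away from `D`. The center of `C* ∪ C0` within `r*` of such a point is then neither in `D`
(hence not in `C0`) nor outside `T` (it would be within `ρ` of `D`), so by (a) it is a center of
`C*` in a group of `𝒢`. There are only `k̃` of those, and two points sharing a center are within
`2 r*` of each other.
-/

open Metric Set

section Packing

variable {X : Type*} [PseudoMetricSpace X]

theorem Set.Finite.exists_mem_dist_le_of_infDist_le {A : Set X} (hA : A.Finite) (hne : A.Nonempty)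
    {x : X} {r : ℝ} (h : infDist x A ≤ r) : ∃ a ∈ A, dist x a ≤ r := by
  obtain ⟨a, ha, hxa⟩ := hA.isCompact.exists_infDist_eq_dist hne x
  exact ⟨a, ha, hxa ▸ h⟩

/-- Points more than `2 r` apart need pairwise distinct centers to be covered within `r`. -/
theorem Set.Finite.card_le_ncard_of_pairwise_lt_dist {ι : Type*} [Fintype ι] {A : Set X}
    (hA : A.Finite) {p : ι → X} {r : ℝ} (hcover : ∀ i, ∃ a ∈ A, dist (p i) a ≤ r)
    (hsep : Pairwise fun i j => 2 * r < dist (p i) (p j)) : Fintype.card ι ≤ A.ncard := by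
  choose a haA hpa using hcover
  have : Finite A := hA.to_subtype
  have hinj : Function.Injective fun i => (⟨a i, haA i⟩ : A) := by
    intro i j hij
    by_contra hne
    have hai : a i = a j := congrArg Subtype.val hij
    have hfar : 2 * r < dist (p i) (p j) := hsep hne
    have hnear : dist (p i) (p j) ≤ 2 * r :=
      calc dist (p i) (p j) ≤ dist (p i) (a i) + dist (p j) (a j) := by
            simpa only [hai, dist_comm (a j)] using dist_triangle (p i) (a i) (p j)
        _ ≤ 2 * r := by linarith [hpa i, hpa j]
    exact hnear.not_gt hfar
  rw [← Nat.card_eq_fintype_card, ← Nat.card_coe_set_eq]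
  exact Nat.card_le_card_of_injective _ hinj

end Packing

theorem Set.ncard_inter_setOf_mem_eq_sum {X ι : Type*} [Finite X] (G : X → ι) (C : Set X)
    (𝒢 : Finset ι) :
    (C ∩ {x | G x ∈ 𝒢}).ncard = ∑ i ∈ 𝒢, (C ∩ {x | G x = i}).ncard := by
  classical
  have := Fintype.ofFinite X
  simp only [ncard_eq_toFinset_card']
  rw [Finset.card_eq_sum_card_fiberwise (f := G) (t := 𝒢)]
  · refine Finset.sum_congr rfl fun i hi => congrArg Finset.card ?_
    ext x
    simp only [Finset.mem_filter, mem_toFinset, mem_inter_iff, mem_ofPred_eq]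
    exact ⟨fun h => ⟨h.1.1, h.2⟩, fun h => ⟨⟨h.1, h.2 ▸ hi⟩, h.2⟩⟩
  · intro x hx
    simp at hx
    exact hx.2

theorem Set.union_nonempty_of_ncard_inter_eq {X ι : Type*} [Finite X] {G : X → ι}
    {C C' C0 : Set X} (h : ∀ i, (C ∩ {x | G x = i}).ncard = (C' ∩ {x | G x = i}).ncard)
    (hC : (C ∪ C0).Nonempty) : (C' ∪ C0).Nonempty := by
  obtain ⟨x, hxC | hxC0⟩ := hC
  · have hpos : 0 < (C' ∩ {y | G y = G x}).ncard := by
      rw [← h, ncard_pos (toFinite _)]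
      exact ⟨x, hxC, rfl⟩
    obtain ⟨y, hyC', -⟩ := (ncard_pos (toFinite _)).mp hpos
    exact ⟨y, Or.inl hyC'⟩
  · exact ⟨x, Or.inr hxC0⟩

namespace IsGreedySeq

variable {X : Type*} [MetricSpace X] {T D : Set X} {k : ℕ} {c : Fin k → X} {s : X} {R : ℝ}

theorem lt_dist_of_lt_infDist (hc : IsGreedySeq T D c) (hs : s ∈ T)
    (hR : R < infDist s (D ∪ range c)) (i : Fin k) {x : X} (hx : x ∈ D ∪ c '' {j | j < i}) :
    R < dist (c i) x :=
  calc R < infDist s (D ∪ range c) := hR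
    _ ≤ infDist s (D ∪ c '' {j | j < i}) :=
      infDist_le_infDist_of_subset (union_subset_union_right D (image_subset_range c _)) ⟨x, hx⟩
    _ ≤ infDist (c i) (D ∪ c '' {j | j < i}) := hc.2 i s hs
    _ ≤ dist (c i) x := infDist_le_dist_of_mem hx

theorem lt_dist_snoc_of_mem (hc : IsGreedySeq T D c) (hs : s ∈ T)
    (hR : R < infDist s (D ∪ range c)) (j : Fin (k + 1)) {x : X} (hx : x ∈ D) :
    R < dist (Fin.snoc (α := fun _ => X) c s j) x := by
  rcases Fin.eq_castSucc_or_eq_last j with ⟨i, rfl⟩ | rfl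
  · simpa only [Fin.snoc_castSucc] using hc.lt_dist_of_lt_infDist hs hR i (Or.inl hx)
  · simpa only [Fin.snoc_last] using hR.trans_le (infDist_le_dist_of_mem (Or.inl hx))

theorem pairwise_lt_dist_snoc (hc : IsGreedySeq T D c) (hs : s ∈ T)
    (hR : R < infDist s (D ∪ range c)) :
    Pairwise fun i j : Fin (k + 1) =>
      R < dist (Fin.snoc (α := fun _ => X) c s i) (Fin.snoc (α := fun _ => X) c s j) := by
  have hlt : ∀ i j : Fin (k + 1), i < j →
      R < dist (Fin.snoc (α := fun _ => X) c s j) (Fin.snoc (α := fun _ => X) c s i) := by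
    intro i j hij
    obtain ⟨i, rfl⟩ := Fin.exists_castSucc_eq.mpr (hij.trans_le (Fin.le_last j)).ne
    rcases Fin.eq_castSucc_or_eq_last j with ⟨j, rfl⟩ | rfl
    · simpa only [Fin.snoc_castSucc] using
        hc.lt_dist_of_lt_infDist hs hR j (Or.inr ⟨i, Fin.castSucc_lt_castSucc_iff.mp hij, rfl⟩)
    · simpa only [Fin.snoc_castSucc, Fin.snoc_last] using
        hR.trans_le (infDist_le_dist_of_mem (Or.inr ⟨i, rfl⟩))
  intro i j hij
  rcases hij.lt_or_gt with h | h
  · rw [dist_comm]; exact hlt i j h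
  · exact hlt j i h

end IsGreedySeq

theorem mem_of_dist_le_of_forall_lt_dist {X : Type*} [PseudoMetricSpace X] {T D : Set X}
    (hD : D.Finite) {ρ r : ℝ} (hb : ∀ y ∉ T, D.Nonempty ∧ infDist y D ≤ ρ) {x c : X}
    (hxD : ∀ d ∈ D, ρ + r < dist x d) (hxc : dist x c ≤ r) : c ∈ T := by
  by_contra hcT
  obtain ⟨hDne, hcD⟩ := hb c hcT
  obtain ⟨d, hd, hcd⟩ := hD.exists_mem_dist_le_of_infDist_le hDne hcD
  have := dist_triangle x c d
  linarith [hxD d hd]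

theorem stmt8_general {X : Type*} [MetricSpace X] [Fintype X] {m : ℕ}
    (G : X → Fin m) (kf : Fin m → ℕ)
    (C0 : Set X)
    (rfair : ℝ)
    (hr : IsLeast {r : ℝ | ∃ C : Set X, (∀ i, (C ∩ {x | G x = i}).ncard = kf i) ∧
        (C ∪ C0).Nonempty ∧ r = ⨆ s : X, Metric.infDist s (C ∪ C0)} rfair)
    (Cstar : Set X)
    (hCstar1 : ∀ i, (Cstar ∩ {x | G x = i}).ncard = kf i)
    (hCstar2 : ∀ s : X, Metric.infDist s (Cstar ∪ C0) ≤ rfair)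
    (𝒢 : Finset (Fin m)) (D : Set X) (hC0D : C0 ⊆ D)
    (ρ : ℝ) (hρ : 0 ≤ ρ)
    (T : Set X)
    (ha : T ⊆ (⋃ i ∈ 𝒢, {x | G x = i}) ∪ D)
    (hwd : (Tᶜ ∪ D).Nonempty → D.Nonempty)
    (hb : ∀ s ∈ Tᶜ ∪ D, Metric.infDist s D ≤ ρ)
    (ktil : ℕ) (hktil : ktil = ∑ i ∈ 𝒢, kf i)
    (f : Fin ktil → X) (hf : IsGreedySeq T D f) :
    ∀ s ∈ T, Metric.infDist s (D ∪ Set.range f) ≤ max (ρ + rfair) (2 * rfair) := by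
  intro s hs
  by_contra! hfar
  set p := Fin.snoc (α := fun _ => X) f s
  obtain ⟨C, hC, hCne, -⟩ := hr.1
  have hne : (Cstar ∪ C0).Nonempty :=
    union_nonempty_of_ncard_inter_eq (fun i => (hC i).trans (hCstar1 i).symm) hCne
  have hcover : ∀ j, ∃ a ∈ Cstar ∩ {x | G x ∈ 𝒢}, dist (p j) a ≤ rfair := by
    intro j
    obtain ⟨a, haC, hpa⟩ := (toFinite _).exists_mem_dist_le_of_infDist_le hne (hCstar2 (p j))
    have hpD : ∀ d ∈ D, ρ + rfair < dist (p j) d := fun d hd =>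
      (le_max_left _ _).trans_lt (hf.lt_dist_snoc_of_mem hs hfar j hd)
    have haD : a ∉ D := fun haD => (hpD a haD).not_ge (by linarith)
    have haT : a ∈ T := mem_of_dist_le_of_forall_lt_dist (toFinite D)
      (fun y hy => ⟨hwd ⟨y, Or.inl hy⟩, hb y (Or.inl hy)⟩) hpD hpa
    have haG : G a ∈ 𝒢 := by simpa using (ha haT).resolve_right haD
    exact ⟨a, ⟨haC.resolve_right fun h => haD (hC0D h), haG⟩, hpa⟩
  have hcard := (toFinite _).card_le_ncard_of_pairwise_lt_dist hcover
    ((hf.pairwise_lt_dist_snoc hs hfar).mono fun i j h => (le_max_right _ _).trans_lt h)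
  rw [Fintype.card_fin, ncard_inter_setOf_mem_eq_sum, hktil] at hcard
  simp only [hCstar1] at hcard
  omega

/-- the inductive-step inequality in the proof of Theorem 2 of the paper
for the multi-group algorithm. The groups are `{x | G x = i}`, `i : Fin m`; `rfair` is the
optimal fair `k`-center cost and `Cstar` an optimal fair solution. The hypothesis `hwd`
records the implicit well-definedness requirement of hypothesis (b): whenever there is a
point `s ∈ (S \ T) ∪ D`, the distance `d(s, D)` must be well defined, i.e. `D ≠ ∅`. -/
theorem stmt8 {X : Type*} [MetricSpace X] [Fintype X] [Nonempty X] {m : ℕ}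
    (G : X → Fin m) (kf : Fin m → ℕ)
    (hkf : ∀ i, kf i ≤ Set.ncard {x | G x = i})
    (C0 : Set X)
    (rfair : ℝ)
    (hr : IsLeast {r : ℝ | ∃ C : Set X, (∀ i, (C ∩ {x | G x = i}).ncard = kf i) ∧
        (C ∪ C0).Nonempty ∧ r = ⨆ s : X, Metric.infDist s (C ∪ C0)} rfair)
    (Cstar : Set X)
    (hCstar1 : ∀ i, (Cstar ∩ {x | G x = i}).ncard = kf i)
    (hCstar2 : ∀ s : X, Metric.infDist s (Cstar ∪ C0) ≤ rfair)
    (𝒢 : Finset (Fin m)) (D : Set X) (hC0D : C0 ⊆ D)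
    (ρ : ℝ) (hρ : 0 ≤ ρ)
    (T : Set X) (hT : T.Nonempty)
    (ha : T ⊆ (⋃ i ∈ 𝒢, {x | G x = i}) ∪ D)
    (hwd : (Tᶜ ∪ D).Nonempty → D.Nonempty)
    (hb : ∀ s ∈ Tᶜ ∪ D, Metric.infDist s D ≤ ρ)
    (ktil : ℕ) (hktil : ktil = ∑ i ∈ 𝒢, kf i)
    (f : Fin ktil → X) (hf : IsGreedySeq T D f) :
    ∀ s ∈ T, Metric.infDist s (D ∪ Set.range f) ≤ max (ρ + rfair) (2 * rfair) :=
  stmt8_general G kf C0 rfair hr Cstar hCstar1 hCstar2 𝒢 D hC0D ρ hρ T ha hwd hb ktil hktil f hf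
end
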